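/- arXiv:1511.06812 — 2 statements merged into one kernel-verified Lean document; each statement's English description precedes it below -/
import Mathlib

section
/- Let X be a compact Hausdorff topological space, Y a Hausdorff topological space, h : X → Y a continuous map, and p ∈ Y a point whose fiber h⁻¹({p}) is finite. If c : [0,∞) → X is continuous and h ∘ c tends to p as the parameter tends to infinity (Filter.Tendsto (h ∘ c) atTop (𝓝 p)), then there exists x ∈ h⁻¹({p}) such that c tends to x as the parameter tends to infinity (Filter.Tendsto c atTop (𝓝 x)). -/
open scoped Topology

/-- The key topological lemma in the proof of item (6) of Proposition 1.5 of the
paper: if `h ∘ c` converges to a point `p` with finite fiber, then the curve `c`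
itself converges to one of the finitely many points of the fiber. -/
theorem tendsto_lift_through_finite_fiber
    {X Y : Type*} [TopologicalSpace X] [CompactSpace X] [T2Space X]
    [TopologicalSpace Y] [T2Space Y]
    (h : X → Y) (hh : Continuous h) (p : Y) (hfin : (h ⁻¹' {p}).Finite)
    (c : ℝ → X) (hc : ContinuousOn c (Set.Ici (0:ℝ)))
    (hlim : Filter.Tendsto (h ∘ c) Filter.atTop (𝓝 p)) :
    ∃ x ∈ h ⁻¹' {p}, Filter.Tendsto c Filter.atTop (𝓝 x) := by
  classical
  set F : Set X := h ⁻¹' {p} with hF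
  -- separate the finitely many fiber points by pairwise disjoint open sets
  obtain ⟨U, hU, hUdisj⟩ := hfin.t2_separation
  set W : Set X := ⋃ x ∈ F, U x with hWdef
  have hWopen : IsOpen W := isOpen_biUnion fun x _ => (hU x).2
  have hFW : F ⊆ W := fun x hx => Set.mem_biUnion hx (hU x).1
  -- the complement of W is compact, so its image is closed and misses p
  have hK : IsCompact Wᶜ := hWopen.isClosed_compl.isCompact
  have hKim : IsClosed (h '' Wᶜ) := (hK.image hh).isClosed
  have hpK : p ∉ h '' Wᶜ := by
    rintro ⟨x, hx, hxp⟩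
    exact hx (hFW (by simpa [hF] using hxp))
  -- eventually the curve lies in W
  have hev : ∀ᶠ t in Filter.atTop, c t ∈ W := by
    have hmem : (h '' Wᶜ)ᶜ ∈ 𝓝 p := hKim.isOpen_compl.mem_nhds hpK
    filter_upwards [hlim hmem] with t ht
    by_contra hcW
    exact ht (Set.mem_image_of_mem h hcW)
  obtain ⟨T, hT⟩ := Filter.eventually_atTop.1 hev
  set T₀ : ℝ := max T 0 with hT₀
  have hT₀0 : (0:ℝ) ≤ T₀ := le_max_right _ _
  have hWmem : ∀ t, T₀ ≤ t → c t ∈ W := fun t ht => hT t ((le_max_left _ _).trans ht)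
  -- the tail of the curve is connected
  have hS : IsPreconnected (c '' Set.Ici T₀) :=
    isPreconnected_Ici.image c (hc.mono (Set.Ici_subset_Ici.2 hT₀0))
  -- the starting point of the tail lies in some U z, z ∈ F
  obtain ⟨z, hzF, hzU⟩ : ∃ z ∈ F, c T₀ ∈ U z := by
    have := hWmem T₀ le_rfl
    simpa [hWdef] using this
  -- the whole tail lies in U z
  have htail : c '' Set.Ici T₀ ⊆ U z := by
    set V : Set X := ⋃ y ∈ F \ {z}, U y with hVdef
    have hVopen : IsOpen V := isOpen_biUnion fun y _ => (hU y).2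
    have hcover : c '' Set.Ici T₀ ⊆ U z ∪ V := by
      rintro _ ⟨t, ht, rfl⟩
      have := hWmem t ht
      simp only [hWdef, Set.mem_iUnion] at this
      obtain ⟨y, hyF, hy⟩ := this
      rcases eq_or_ne y z with rfl | hne
      · exact Or.inl hy
      · exact Or.inr (Set.mem_biUnion ⟨hyF, hne⟩ hy)
    have hZV : c '' Set.Ici T₀ ∩ (U z ∩ V) = ∅ := by
      ext x
      simp only [Set.mem_inter_iff, Set.mem_empty_iff_false, iff_false]
      rintro ⟨-, hxz, hxV⟩
      simp only [hVdef, Set.mem_iUnion] at hxV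
      obtain ⟨y, ⟨hyF, hyne⟩, hy⟩ := hxV
      exact (hUdisj hzF hyF (Ne.symm hyne)).le_bot ⟨hxz, hy⟩
    by_contra hsub
    obtain ⟨w, hw, hwz⟩ := Set.not_subset.1 hsub
    have hne1 : (c '' Set.Ici T₀ ∩ U z).Nonempty :=
      ⟨c T₀, Set.mem_image_of_mem c Set.self_mem_Ici, hzU⟩
    have hne2 : (c '' Set.Ici T₀ ∩ V).Nonempty := by
      refine ⟨w, hw, ?_⟩
      rcases hcover hw with hw' | hw'
      · exact absurd hw' hwz
      · exact hw'
    obtain ⟨x, hx⟩ := hS (U z) V (hU z).2 hVopen hcover hne1 hne2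
    exact (Set.eq_empty_iff_forall_notMem.1 hZV x) hx
  -- eventually the curve is in U z
  have hevz : ∀ᶠ t in Filter.atTop, c t ∈ U z :=
    Filter.eventually_atTop.2 ⟨T₀, fun t ht => htail (Set.mem_image_of_mem c ht)⟩
  -- z is the unique cluster point of c along atTop
  refine ⟨z, hzF, ?_⟩
  refine tendsto_nhds_of_unique_mapClusterPt fun x hx => ?_
  -- x is in the fiber
  have hxF : x ∈ F := by
    have hmc : MapClusterPt (h x) Filter.atTop (h ∘ c) :=
      hx.continuousAt_comp hh.continuousAt
    have hne : (𝓝 (h x) ⊓ 𝓝 p).NeBot :=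
      hmc.neBot.mono (inf_le_inf_left _ hlim)
    exact eq_of_nhds_neBot hne
  -- x frequently visited in U x, but eventually in U z, so U x ∩ U z ≠ ∅
  have hfreq : ∃ᶠ t in Filter.atTop, c t ∈ U x :=
    mapClusterPt_iff_frequently.1 hx (U x) ((hU x).2.mem_nhds (hU x).1)
  obtain ⟨t, htx, htz⟩ := (hfreq.and_eventually hevz).exists
  by_contra hxz
  exact (hUdisj hxF hzF hxz).le_bot ⟨htx, htz⟩
end

section
/- Let B be a compact topological space, X a Hausdorff topological space, and α : [0,1] × B → X a continuous surjective map. Set P := α({1} × B) and assume that α([0,1) × B) ∩ P = ∅. Then for every open set U ⊆ X with P ⊆ U there exists A ∈ [0,1) such that X \ α([0,A) × B) ⊆ U. (In other words, the closed neighborhoods V_A := X \ α([0,A) × B) of P obtained by flowing in from the boundary for time A form a neighborhood basis of P: every neighborhood of P contains some V_A.) -/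
open scoped Topology unitInterval

/-- Property (iv) of the system of closed neighborhoods `V_A(Q)` of Section 2 of
the paper, abstracted: if `α : [0,1] × B → X` is a continuous surjective completed
flow collapsing `X` onto `P := α({1} × B)`, with `α([0,1) × B)` disjoint from `P`,
then the closed sets `V_A := X \ α([0,A) × B)` form a neighborhood basis of `P`:
every open set containing `P` contains some `V_A`. -/
theorem collapse_neighborhood_basis
    {B X : Type*} [TopologicalSpace B] [CompactSpace B]
    [TopologicalSpace X] [T2Space X]
    (α : unitInterval × B → X) (hα : Continuous α) (hsurj : Function.Surjective α)
    (P : Set X) (hP : P = α '' {p : unitInterval × B | p.1 = 1})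
    (hdisj : (α '' {p : unitInterval × B | (p.1 : ℝ) < 1}) ∩ P = ∅) :
    ∀ U : Set X, IsOpen U → P ⊆ U →
      ∃ A : ℝ, 0 ≤ A ∧ A < 1 ∧
        (α '' {p : unitInterval × B | (p.1 : ℝ) < A})ᶜ ⊆ U := by
  intro U hU hPU
  set K : Set (unitInterval × B) := α ⁻¹' Uᶜ with hKdef
  have hKc : IsCompact K :=
    (hU.isClosed_compl.preimage hα).isCompact
  rcases K.eq_empty_or_nonempty with hKe | hKne
  · refine ⟨1/2, by norm_num, by norm_num, ?_⟩
    intro x hx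
    by_contra hxU
    obtain ⟨p, hp⟩ := hsurj x
    have : p ∈ K := by simp [hKdef, hp, hxU]
    simp [hKe] at this
  · obtain ⟨p₀, hp₀K, hmax⟩ :=
      hKc.exists_isMaxOn hKne ((continuous_induced_dom.comp continuous_fst).continuousOn)
    set m : ℝ := (p₀.1 : ℝ) with hm
    have hm1 : m < 1 := by
      rcases lt_or_eq_of_le p₀.1.2.2 with h | h
      · exact h
      · exfalso
        have hp1 : p₀.1 = 1 := Subtype.ext h
        have : α p₀ ∈ P := hP ▸ ⟨p₀, hp1, rfl⟩
        exact hp₀K (hPU this)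
    refine ⟨(m + 1) / 2, by linarith [p₀.1.2.1], by linarith, ?_⟩
    intro x hx
    by_contra hxU
    obtain ⟨p, hp⟩ := hsurj x
    have hpK : p ∈ K := by simp [hKdef, hp, hxU]
    have hle : (p.1 : ℝ) ≤ m := hmax hpK
    exact hx ⟨p, by simpa using by linarith, hp⟩
end
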